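/- Let P be a Markov kernel on a measurable space E, let B ⊆ E be measurable, and let g : E → ℝ be bounded measurable with 0 ≤ g ≤ 1 and g(x) = 1 for every x ∉ B. Let Q be the sub-kernel Q(x,A) := P(x, A ∩ B^c). If (w, λ) is a bounded MPE solution for g, then for every x ∈ E and every n ≥ 0, (Q^n 𝟙)(x) ≤ e^{2‖w‖+1}·e^{−(1−λ)n}; that is, the probability that the chain started at x avoids B at each of the times 1, …, n is at most e^{2‖w‖+1}·e^{−(1−λ)n}. -/

import Mathlib

/-!
The function `v = exp (‖w‖ + 1 + w - g)` is a supersolution for the sub-kernel `Q` with rate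
`e^(λ-1)`: since `g = 1` off `B`, `∫_{Bᶜ} v dP(x) ≤ e^‖w‖ ∫ e^w dP(x)`, and the MPE equation says
`∫ e^w dP(x) = e^(w x - g x + λ)`, so the integral is at most `e^(λ-1) v(x)`. As `1 ≤ v ≤ e^(2‖w‖+1)`,
iterating gives `Qⁿ𝟙 ≤ e^((λ-1)n) v ≤ e^(2‖w‖+1) e^(-(1-λ)n)`.
-/

open MeasureTheory ProbabilityTheory

/-- `staySeq P C n x = (Q_C^n 𝟙)(x)`, the probability that the chain with kernel `P` started
at `x` lies in `C` at each of the times `1, …, n`, where `Q_C(x,A) = P(x, A ∩ C)` is the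
sub-kernel associated with `C`. -/
noncomputable def staySeq {E : Type*} [MeasurableSpace E] (P : Kernel E E) (C : Set E) :
    ℕ → E → ℝ
  | 0 => fun _ => 1
  | n + 1 => fun x => ∫ y in C, staySeq P C n y ∂(P x)

section staySeq

variable {E : Type*} [MeasurableSpace E] (P : Kernel E E) (C : Set E)

lemma staySeq_nonneg (n : ℕ) (x : E) : 0 ≤ staySeq P C n x := by
  induction n generalizing x with
  | zero => exact zero_le_one
  | succ n ih => exact integral_nonneg ih

lemma staySeq_le_pow_mul_of_supersolution {v : E → ℝ} {ρ : ℝ} (hρ : 0 ≤ ρ)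
    (hv_one : ∀ x, 1 ≤ v x) (hv_int : ∀ x, IntegrableOn v C (P x))
    (hv_super : ∀ x, ∫ y in C, v y ∂(P x) ≤ ρ * v x) (n : ℕ) (x : E) :
    staySeq P C n x ≤ ρ ^ n * v x := by
  induction n generalizing x with
  | zero => simpa [staySeq] using hv_one x
  | succ n ih =>
    calc staySeq P C (n + 1) x = ∫ y in C, staySeq P C n y ∂(P x) := rfl
      _ ≤ ∫ y in C, ρ ^ n * v y ∂(P x) :=
        integral_mono_of_nonneg (ae_of_all _ (staySeq_nonneg P C n))
          ((hv_int x).const_mul _) (ae_of_all _ ih)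
      _ = ρ ^ n * ∫ y in C, v y ∂(P x) := integral_const_mul _ _
      _ ≤ ρ ^ n * (ρ * v x) := by gcongr; exact hv_super x
      _ = ρ ^ (n + 1) * v x := by ring

end staySeq

section MPE

variable {E : Type*} [MeasurableSpace E] {μ : Measure E}

lemma integrable_exp_of_le [IsFiniteMeasure μ] {f : E → ℝ} (hf : Measurable f) {C : ℝ}
    (hC : ∀ x, f x ≤ C) : Integrable (fun y => Real.exp (f y)) μ :=
  .of_bound hf.exp.aestronglyMeasurable (Real.exp C) <| ae_of_all _ fun y => by
    rw [Real.norm_of_nonneg (Real.exp_pos _).le]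
    exact Real.exp_le_exp.2 (hC y)

variable [NeZero μ] {w : E → ℝ}

lemma integral_exp_eq_of_mpe (hw_int : Integrable (fun y => Real.exp (w y)) μ)
    {x : E} {g lam : ℝ}
    (hMPE : w x = g - lam + Real.log (∫ y, Real.exp (w y) ∂μ)) :
    ∫ y, Real.exp (w y) ∂μ = Real.exp (w x - g + lam) := by
  rw [← Real.exp_log (integral_exp_pos hw_int)]
  congr 1
  linarith

lemma setIntegral_compl_exp_le_of_mpe (hw_int : Integrable (fun y => Real.exp (w y)) μ)
    {B : Set E} (hB : MeasurableSet B) {g : E → ℝ}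
    (hg_out : ∀ x, x ∉ B → g x = 1) {x : E} {lam : ℝ}
    (hMPE : w x = g x - lam + Real.log (∫ y, Real.exp (w y) ∂μ)) (c : ℝ) :
    ∫ y in Bᶜ, Real.exp (c + w y - g y) ∂μ ≤ Real.exp (lam - 1) * Real.exp (c + w x - g x) := by
  have h_off_B : Set.EqOn (fun y => Real.exp (c + w y - g y))
      (fun y => Real.exp (c - 1) * Real.exp (w y)) Bᶜ := fun y hy => by
    simp only [hg_out y hy, ← Real.exp_add]
    ring_nf
  calc ∫ y in Bᶜ, Real.exp (c + w y - g y) ∂μ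
        = Real.exp (c - 1) * ∫ y in Bᶜ, Real.exp (w y) ∂μ := by
        rw [setIntegral_congr_fun hB.compl h_off_B, integral_const_mul]
    _ ≤ Real.exp (c - 1) * ∫ y, Real.exp (w y) ∂μ :=
        mul_le_mul_of_nonneg_left
          (setIntegral_le_integral hw_int (ae_of_all _ fun y => (Real.exp_pos _).le))
          (Real.exp_pos _).le
    _ = Real.exp (lam - 1) * Real.exp (c + w x - g x) := by
        rw [integral_exp_eq_of_mpe hw_int hMPE, ← Real.exp_add, ← Real.exp_add]
        ring_nf

end MPE

/-- If `0 ≤ g ≤ 1`, `g = 1` off `B`, and `(w, lam)` is a bounded MPE solution for `g`, then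
the probability of avoiding `B` during the first `n` steps is at most
`e^{2‖w‖+1} e^{-(1-lam) n}`. -/
theorem avoidance_probability_bound {E : Type*} [MeasurableSpace E]
    (P : Kernel E E) [IsMarkovKernel P]
    (B : Set E) (hB : MeasurableSet B)
    (g : E → ℝ) (hg_meas : Measurable g)
    (hg_nonneg : ∀ x, 0 ≤ g x) (hg_le_one : ∀ x, g x ≤ 1)
    (hg_out : ∀ x, x ∉ B → g x = 1)
    (w : E → ℝ) (hw_meas : Measurable w) (Cw : ℝ) (hw_bdd : ∀ x, |w x| ≤ Cw)
    (lam : ℝ)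
    (hMPE : ∀ x, w x = g x - lam + Real.log (∫ y, Real.exp (w y) ∂(P x))) :
    ∀ x : E, ∀ n : ℕ,
      staySeq P Bᶜ n x ≤ Real.exp (2 * (⨆ x, |w x|) + 1) * Real.exp (-(1 - lam) * n) := by
  set M := ⨆ x, |w x|
  have hM : ∀ x, |w x| ≤ M := le_ciSup ⟨Cw, by rintro _ ⟨x, rfl⟩; exact hw_bdd x⟩
  have hexp_int (x : E) : Integrable (fun y => Real.exp (w y)) (P x) :=
    integrable_exp_of_le hw_meas fun y => le_of_abs_le (hM y)
  set v := fun y => Real.exp (M + 1 + w y - g y)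
  have hv_exponent (y : E) : 0 ≤ M + 1 + w y - g y ∧ M + 1 + w y - g y ≤ 2 * M + 1 := by
    constructor <;> linarith [abs_le.1 (hM y), hg_nonneg y, hg_le_one y]
  have hv_int (x : E) : IntegrableOn v Bᶜ (P x) :=
    (integrable_exp_of_le (by fun_prop) fun y => (hv_exponent y).2).integrableOn
  intro x n
  calc staySeq P Bᶜ n x ≤ Real.exp (lam - 1) ^ n * v x :=
        staySeq_le_pow_mul_of_supersolution P Bᶜ (Real.exp_pos _).le
          (fun y => Real.one_le_exp (hv_exponent y).1) hv_int
          (fun x => setIntegral_compl_exp_le_of_mpe (hexp_int x) hB hg_out (hMPE x) _) n x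
    _ ≤ Real.exp (lam - 1) ^ n * Real.exp (2 * M + 1) := by
        gcongr
        exact Real.exp_le_exp.2 (hv_exponent x).2
    _ = Real.exp (2 * M + 1) * Real.exp (-(1 - lam) * n) := by
        rw [← Real.exp_nat_mul]
        ring_nf
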